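/- Let p be a point of the plane and consider the unit triangular lattice (triangular tiling with unit edge length). Then the open disk of radius 1 centered at p contains at most 4 lattice points in its interior if p is not a lattice point, and exactly 1 lattice point (namely p itself) if p is a lattice point. -/
import Mathlib

/-- The unit triangular lattice in the plane (modelled as ℂ):
integer combinations of (1,0) and (1/2, √3/2). -/
def triLattice : Set ℂ :=
  {z | ∃ a b : ℤ, z = (a : ℂ) + (b : ℂ) * (1 / 2 + (Real.sqrt 3 / 2) * Complex.I)}

namespace Tri18

noncomputable def ω : ℂ := 1 / 2 + (Real.sqrt 3 / 2) * Complex.I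

def Q (m n : ℤ) : ℤ := m ^ 2 + m * n + n ^ 2

lemma normSq_eq (m n : ℤ) :
    Complex.normSq ((m : ℂ) + (n : ℂ) * ω) = (Q m n : ℤ) := by
  have h3 : Real.sqrt 3 ^ 2 = 3 := Real.sq_sqrt (by norm_num)
  have hre : ((m : ℂ) + (n : ℂ) * ω).re = (m : ℝ) + n / 2 := by
    simp [ω, Complex.add_re, Complex.mul_re]
    ring
  have him : ((m : ℂ) + (n : ℂ) * ω).im = n * Real.sqrt 3 / 2 := by
    simp [ω, Complex.add_im, Complex.mul_im]
    ring
  rw [Complex.normSq_apply, hre, him]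
  push_cast [Q]
  nlinarith [h3]

lemma Q_mem_L {m n : ℤ} (h1 : 1 ≤ Q m n) (h3 : Q m n ≤ 3) :
    (m, n) ∈ ([(-2, 1), (-1, -1), (-1, 0), (-1, 1), (-1, 2), (0, -1),
      (0, 1), (1, -2), (1, -1), (1, 0), (1, 1), (2, -1)] : List (ℤ × ℤ)) := by
  have hQ : 4 * Q m n = (2 * m + n) ^ 2 + 3 * n ^ 2 := by simp only [Q]; ring
  have hQ' : 4 * Q m n = (m + 2 * n) ^ 2 + 3 * m ^ 2 := by simp only [Q]; ring
  have hn : n ^ 2 ≤ 4 := by nlinarith [sq_nonneg (2 * m + n)]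
  have hm : m ^ 2 ≤ 4 := by nlinarith [sq_nonneg (m + 2 * n)]
  have hn1 : -2 ≤ n ∧ n ≤ 2 := by constructor <;> nlinarith
  have hm1 : -2 ≤ m ∧ m ≤ 2 := by constructor <;> nlinarith
  obtain ⟨hn2, hn3⟩ := hn1
  obtain ⟨hm2, hm3⟩ := hm1
  interval_cases m <;> interval_cases n <;> simp_all [Q]

def L : List (ℤ × ℤ) := [(-2, 1), (-1, -1), (-1, 0), (-1, 1), (-1, 2), (0, -1),
      (0, 1), (1, -2), (1, -1), (1, 0), (1, 1), (2, -1)]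

lemma no4 : ∀ a ∈ L, ∀ b ∈ L, ∀ c ∈ L, ∀ d ∈ L,
    (a.1 - b.1, a.2 - b.2) ∈ L → (a.1 - c.1, a.2 - c.2) ∈ L →
    (a.1 - d.1, a.2 - d.2) ∈ L → (b.1 - c.1, b.2 - c.2) ∈ L →
    (b.1 - d.1, b.2 - d.2) ∈ L → (c.1 - d.1, c.2 - d.2) ∈ L → False := by
  decide

end Tri18


namespace Tri18

lemma Q_one_le {m n : ℤ} (h : ¬(m = 0 ∧ n = 0)) : 1 ≤ Q m n := by
  by_contra hc
  push_neg at hc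
  have hQ : (2 * m + n) ^ 2 + 3 * n ^ 2 ≤ 0 := by simp only [Q] at hc; nlinarith
  have h1 : (2 * m + n) ^ 2 = 0 := by nlinarith [sq_nonneg (2 * m + n), sq_nonneg n]
  have h2 : n ^ 2 = 0 := by nlinarith [sq_nonneg (2 * m + n), sq_nonneg n]
  rw [pow_eq_zero_iff (by norm_num)] at h1 h2
  omega

lemma dist_sq {z w : ℂ} {a b c d : ℤ} (hz : z = (a : ℂ) + (b : ℂ) * ω)
    (hw : w = (c : ℂ) + (d : ℂ) * ω) :
    (Q (a - c) (b - d) : ℝ) = dist z w ^ 2 := by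
  have : z - w = ((a - c : ℤ) : ℂ) + ((b - d : ℤ) : ℂ) * ω := by
    rw [hz, hw]; push_cast; ring
  rw [Complex.dist_eq, Complex.sq_norm, this, normSq_eq]

lemma pair_mem {p z w : ℂ} {a b c d : ℤ} (hz : z = (a : ℂ) + (b : ℂ) * ω)
    (hw : w = (c : ℂ) + (d : ℂ) * ω) (hzp : z ∈ Metric.ball p 1)
    (hwp : w ∈ Metric.ball p 1) (hne : z ≠ w) : (a - c, b - d) ∈ L := by
  have hd : dist z w < 2 := by
    calc dist z w ≤ dist z p + dist p w := dist_triangle z p w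
    _ < 2 := by
      rw [Metric.mem_ball] at hzp hwp
      rw [dist_comm p w]
      linarith
  have hQ4 : (Q (a - c) (b - d) : ℝ) < 4 := by
    rw [dist_sq hz hw]
    nlinarith [dist_nonneg (x := z) (y := w)]
  have hQ4' : Q (a - c) (b - d) ≤ 3 := by exact_mod_cast Int.lt_add_one_iff.mp (by exact_mod_cast hQ4)
  have hQ1 : 1 ≤ Q (a - c) (b - d) := by
    apply Q_one_le
    rintro ⟨h1, h2⟩
    have hac : a = c := by omega
    have hbd : b = d := by omega
    subst hac hbd
    exact hne (hz.trans hw.symm)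
  exact Q_mem_L hQ1 hQ4'

lemma mem_lattice_iff {z : ℂ} : z ∈ triLattice ↔ ∃ a b : ℤ, z = (a : ℂ) + (b : ℂ) * ω := Iff.rfl

end Tri18

open Tri18 in
theorem stmt18 (p : ℂ) :
    (p ∉ triLattice → (triLattice ∩ Metric.ball p 1).ncard ≤ 4) ∧
    (p ∈ triLattice → triLattice ∩ Metric.ball p 1 = {p}) := by
  constructor
  · intro _
    by_contra hcon
    push_neg at hcon
    obtain ⟨t, hts, ht5⟩ := Set.exists_subset_card_eq (show 5 ≤ (triLattice ∩ Metric.ball p 1).ncard from hcon)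
    obtain ⟨x1, t1, hn1, rfl, hc1⟩ := Set.eq_insert_of_ncard_eq_succ ht5
    obtain ⟨x2, t2, hn2, rfl, hc2⟩ := Set.eq_insert_of_ncard_eq_succ hc1
    obtain ⟨x3, t3, hn3, rfl, hc3⟩ := Set.eq_insert_of_ncard_eq_succ hc2
    obtain ⟨x4, t4, hn4, rfl, hc4⟩ := Set.eq_insert_of_ncard_eq_succ hc3
    obtain ⟨x5, t5, hn5, rfl, hc5⟩ := Set.eq_insert_of_ncard_eq_succ hc4
    have m1 : x1 ∈ triLattice ∩ Metric.ball p 1 := hts (by simp)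
    have m2 : x2 ∈ triLattice ∩ Metric.ball p 1 := hts (by simp)
    have m3 : x3 ∈ triLattice ∩ Metric.ball p 1 := hts (by simp)
    have m4 : x4 ∈ triLattice ∩ Metric.ball p 1 := hts (by simp)
    have m5 : x5 ∈ triLattice ∩ Metric.ball p 1 := hts (by simp)
    simp only [Set.mem_insert_iff, not_or] at hn1 hn2 hn3 hn4
    obtain ⟨a1, b1, h1⟩ := m1.1
    obtain ⟨a2, b2, h2⟩ := m2.1
    obtain ⟨a3, b3, h3⟩ := m3.1
    obtain ⟨a4, b4, h4⟩ := m4.1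
    obtain ⟨a5, b5, h5⟩ := m5.1
    have ne12 : x1 ≠ x2 := hn1.1
    have ne13 : x1 ≠ x3 := hn1.2.1
    have ne14 : x1 ≠ x4 := hn1.2.2.1
    have ne15 : x1 ≠ x5 := hn1.2.2.2.1
    have ne23 : x2 ≠ x3 := hn2.1
    have ne24 : x2 ≠ x4 := hn2.2.1
    have ne25 : x2 ≠ x5 := hn2.2.2.1
    have ne34 : x3 ≠ x4 := hn3.1
    have ne35 : x3 ≠ x5 := hn3.2.1
    have ne45 : x4 ≠ x5 := hn4.1
    have P := fun {z w : ℂ} {a b c d : ℤ} hz hw hzw hwz hne =>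
      @pair_mem p z w a b c d hz hw hzw hwz hne
    have q2 : (a2 - a1, b2 - b1) ∈ L := P h2 h1 m2.2 m1.2 ne12.symm
    have q3 : (a3 - a1, b3 - b1) ∈ L := P h3 h1 m3.2 m1.2 ne13.symm
    have q4 : (a4 - a1, b4 - b1) ∈ L := P h4 h1 m4.2 m1.2 ne14.symm
    have q5 : (a5 - a1, b5 - b1) ∈ L := P h5 h1 m5.2 m1.2 ne15.symm
    have d23 : (a2 - a3, b2 - b3) ∈ L := P h2 h3 m2.2 m3.2 ne23
    have d24 : (a2 - a4, b2 - b4) ∈ L := P h2 h4 m2.2 m4.2 ne24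
    have d25 : (a2 - a5, b2 - b5) ∈ L := P h2 h5 m2.2 m5.2 ne25
    have d34 : (a3 - a4, b3 - b4) ∈ L := P h3 h4 m3.2 m4.2 ne34
    have d35 : (a3 - a5, b3 - b5) ∈ L := P h3 h5 m3.2 m5.2 ne35
    have d45 : (a4 - a5, b4 - b5) ∈ L := P h4 h5 m4.2 m5.2 ne45
    refine no4 _ q2 _ q3 _ q4 _ q5 ?_ ?_ ?_ ?_ ?_ ?_ <;>
      simp only [sub_sub_sub_cancel_right] <;> assumption
  · rintro hp
    obtain ⟨a, b, hpp⟩ := hp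
    ext z
    simp only [Set.mem_inter_iff, Set.mem_singleton_iff]
    constructor
    · rintro ⟨⟨c, d, hz⟩, hball⟩
      by_contra hne
      have hQ1 : 1 ≤ Q (c - a) (d - b) := by
        apply Q_one_le
        rintro ⟨hh1, hh2⟩
        have hac : c = a := by omega
        have hbd : d = b := by omega
        subst hac hbd
        exact hne (hz.trans hpp.symm)
      have hd : (Q (c - a) (d - b) : ℝ) = dist z p ^ 2 := dist_sq hz hpp
      rw [Metric.mem_ball] at hball
      have : (1 : ℝ) ≤ dist z p ^ 2 := by
        rw [← hd]
        exact_mod_cast hQ1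
      nlinarith [dist_nonneg (x := z) (y := p)]
    · rintro rfl
      exact ⟨⟨a, b, hpp⟩, by simp⟩
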